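/- Nonnegativity: for every equivariant Littlewood–Richardson skew tableau L ∈ LR_{λ,μ}^ν, the weight c_L is nonnegative, meaning either c_L = 0 or every factor of c_L is of the form y_i - y_j with i > j. -/

import Mathlib

open scoped Classical
open MvPolynomial

noncomputable section

namespace EqLR

/-- Ambient polynomial ring `ℂ[x_1,…,x_d ; y_i (i ∈ ℤ)]`.
The variables `x_j` are indexed by `Fin d` (so `x_{j+1} = X (Sum.inl j)`), and the
variables `y_i` are indexed by `ℤ` (only positive indices actually occur). -/
abbrev P (d : ℕ) := MvPolynomial (Fin d ⊕ ℤ) ℂ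

/-- The variable `y_i`. -/
def yI (d : ℕ) (i : ℤ) : P d := X (Sum.inr i)

/-- The variable `x_v` for a value `v ∈ {1,…,d}` (junk value `0` otherwise). -/
def xv (d : ℕ) (v : ℕ) : P d :=
  if h : v - 1 < d then X (Sum.inl ⟨v - 1, h⟩) else 0

/-- The component `ξ_v` of a vector `ξ ∈ ℕ^d`, for a (1-based) value `v ∈ {1,…,d}`. -/
def vecAt {d : ℕ} (ξ : Fin d → ℕ) (v : ℕ) : ℕ :=
  if h : v - 1 < d then ξ ⟨v - 1, h⟩ else 0

/-- `μ ∈ ℕ^d` is a partition:  `μ_1 ≥ μ_2 ≥ … ≥ μ_d`. -/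
def IsPartitionVec {d : ℕ} (μ : Fin d → ℕ) : Prop :=
  ∀ i j : Fin d, i ≤ j → μ j ≤ μ i

/-- `|μ| = μ_1 + ⋯ + μ_d`. -/
def wt {d : ℕ} (μ : Fin d → ℕ) : ℕ := ∑ i, μ i

/-- `ρ = (d-1, d-2, …, 0)`. -/
def rho (d : ℕ) : Fin d → ℕ := fun i => d - 1 - (i : ℕ)

/-- Cells `(r, c)` (both 0-based) of the Young/reverse Young diagram whose row `r` has
length `μ_{r+1}`.  For the reverse diagram, rows are numbered bottom-to-top and columns
right-to-left; for the ordinary Young diagram, top-to-bottom and left-to-right. -/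
def cells (d : ℕ) (μ : Fin d → ℕ) : Finset (ℕ × ℕ) :=
  (Finset.range d ×ˢ Finset.range (Finset.univ.sup μ + 1)).filter
    fun rc => ∃ h : rc.1 < d, rc.2 < μ ⟨rc.1, h⟩

/-- In the column reading word of a *reverse* diagram (columns right-to-left, i.e. in
increasing 0-based column index, each column read top-to-bottom, i.e. in decreasing
0-based row index), the cell `b` is read strictly before the cell `a`. -/
def revBefore (a b : ℕ × ℕ) : Prop := b.2 < a.2 ∨ (b.2 = a.2 ∧ a.1 < b.1)

/-- In the column reading word of an ordinary Young diagram (rightmost column first,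
each column read top-to-bottom), the cell `b` is read strictly before the cell `a`. -/
def youngBefore (a b : ℕ × ℕ) : Prop := a.2 < b.2 ∨ (b.2 = a.2 ∧ b.1 < a.1)

/-- A reverse tableau of shape `μ`: entries in `{1,…,d}`, weakly increasing along rows
(left to right) and strictly increasing down columns (top to bottom). -/
structure RevTableau (d : ℕ) (μ : Fin d → ℕ) where
  val : ℕ × ℕ → ℕ
  mem : ∀ a ∈ cells d μ, 1 ≤ val a ∧ val a ≤ d
  zero : ∀ a ∉ cells d μ, val a = 0
  row : ∀ r c : ℕ, (r, c + 1) ∈ cells d μ → val (r, c + 1) ≤ val (r, c)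
  col : ∀ r c : ℕ, (r + 1, c) ∈ cells d μ → val (r + 1, c) < val (r, c)

/-- The factor `x_v - y_{(d+1-v) + c(a) - r(a)}` attached to an entry of value `v` in
the cell `a` of the reverse diagram (`c(a) = a.2 + 1`, `r(a) = a.1 + 1`, 1-based). -/
def factor (d : ℕ) (v : ℕ) (a : ℕ × ℕ) : P d :=
  xv d v - yI d ((d : ℤ) + 1 - (v : ℤ) + (a.2 : ℤ) - (a.1 : ℤ))

/-- The factorial Schur function `s_μ(x|y) = Σ_R (x|y)^R`. -/
def fSchur (d : ℕ) (μ : Fin d → ℕ) : P d :=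
  ∑ᶠ R : RevTableau d μ, ∏ a ∈ cells d μ, factor d (R.val a) a

/-- The ordinary Schur function `s_μ(x) = Σ_R x^R`. -/
def schurX (d : ℕ) (μ : Fin d → ℕ) : P d :=
  ∑ᶠ R : RevTableau d μ, ∏ a ∈ cells d μ, xv d (R.val a)

/-- The subalgebra `ℂ[y]` of polynomials in the `y` variables only. -/
def ySub (d : ℕ) : Subalgebra ℂ (P d) :=
  Algebra.adjoin ℂ (Set.range fun i : ℤ => yI d i)

/-- `p` is symmetric in the `x` variables. -/
def SymmX {d : ℕ} (p : P d) : Prop :=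
  ∀ σ : Equiv.Perm (Fin d), rename (⇑(Equiv.sumCongr σ (Equiv.refl ℤ))) p = p

/-- The falling factorial power `(x_j | y)^k = (x_j - y_1)⋯(x_j - y_k)`. -/
def ffPow (d : ℕ) (j : Fin d) (k : ℕ) : P d :=
  ∏ i ∈ Finset.range k, (X (Sum.inl j) - yI d ((i : ℤ) + 1))

/-- `(x|y)^ξ = (x_1|y)^{ξ_1} ⋯ (x_d|y)^{ξ_d}`. -/
def xyPow (d : ℕ) (ξ : Fin d → ℕ) : P d := ∏ j : Fin d, ffPow d j (ξ j)

/-- The alternant `a_ξ(x|y) = det[(x_j|y)^{ξ_i}]`. -/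
def aDet (d : ℕ) (ξ : Fin d → ℕ) : P d :=
  Matrix.det (Matrix.of fun i j : Fin d => ffPow d j (ξ i))

/-! ### Skew barred tableaux of shape `λ*μ` -/

/-- A skew barred tableau of shape `λ*μ`: the Young diagram `λ` (placed above and to
the right of the reverse diagram `μ`) is filled with values in `{1,…,d}` (field `top`),
the reverse diagram `μ` is filled with values in `{1,…,d}` (field `bot`), some of whose
cells may be barred (field `barred`); values weakly increase along rows left-to-right
and strictly increase down columns, ignoring bars. -/
structure SkewBarredTableau (d : ℕ) (lam mu : Fin d → ℕ) where
  top : ℕ × ℕ → ℕ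
  bot : ℕ × ℕ → ℕ
  barred : ℕ × ℕ → Prop
  top_mem : ∀ a ∈ cells d lam, 1 ≤ top a ∧ top a ≤ d
  top_zero : ∀ a ∉ cells d lam, top a = 0
  bot_mem : ∀ a ∈ cells d mu, 1 ≤ bot a ∧ bot a ≤ d
  bot_zero : ∀ a ∉ cells d mu, bot a = 0
  barred_sub : ∀ a, barred a → a ∈ cells d mu
  top_row : ∀ r c : ℕ, (r, c + 1) ∈ cells d lam → top (r, c) ≤ top (r, c + 1)
  top_col : ∀ r c : ℕ, (r + 1, c) ∈ cells d lam → top (r, c) < top (r + 1, c)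
  bot_row : ∀ r c : ℕ, (r, c + 1) ∈ cells d mu → bot (r, c + 1) ≤ bot (r, c)
  bot_col : ∀ r c : ℕ, (r + 1, c) ∈ cells d mu → bot (r + 1, c) < bot (r, c)

namespace SkewBarredTableau

variable {d : ℕ} {lam mu : Fin d → ℕ}

/-- `ω(L^u_{<a})_k`: the number of `k`'s among the unbarred entries of `L` read strictly
before the `μ`-cell `a` in the unbarred column word (all of `λ` is read before `μ`). -/
def countBefore (L : SkewBarredTableau d lam mu) (a : ℕ × ℕ) (k : ℕ) : ℕ :=
  ((cells d lam).filter fun b => L.top b = k).card +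
  ((cells d mu).filter fun b => ¬ L.barred b ∧ L.bot b = k ∧ revBefore a b).card

/-- `ω(L^u_{≤a})_k`: as `countBefore`, but the entry of `a` itself is also counted when
`a` is unbarred. -/
def countUpTo (L : SkewBarredTableau d lam mu) (a : ℕ × ℕ) (k : ℕ) : ℕ :=
  ((cells d lam).filter fun b => L.top b = k).card +
  ((cells d mu).filter fun b => ¬ L.barred b ∧ L.bot b = k ∧ (revBefore a b ∨ b = a)).card

/-- Prefix content within the `λ`-part of the word. -/
def topCountUpTo (L : SkewBarredTableau d lam mu) (a : ℕ × ℕ) (k : ℕ) : ℕ :=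
  ((cells d lam).filter fun b => L.top b = k ∧ (youngBefore a b ∨ b = a)).card

/-- `ω(L^u)_k`: total content of the unbarred column word of `L`. -/
def content (L : SkewBarredTableau d lam mu) (k : ℕ) : ℕ :=
  ((cells d lam).filter fun b => L.top b = k).card +
  ((cells d mu).filter fun b => ¬ L.barred b ∧ L.bot b = k).card

/-- The unbarred column word of `L` is Yamanouchi: every prefix contains at least as
many `k`'s as `(k+1)`'s, for every `k ≥ 1`. -/
def Yamanouchi (L : SkewBarredTableau d lam mu) : Prop :=
  (∀ a ∈ cells d lam, ∀ k : ℕ, 1 ≤ k → L.topCountUpTo a (k + 1) ≤ L.topCountUpTo a k) ∧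
  (∀ a ∈ cells d mu, ¬ L.barred a → ∀ k : ℕ, 1 ≤ k →
      L.countUpTo a (k + 1) ≤ L.countUpTo a k)

/-- `L` is an equivariant Littlewood–Richardson skew tableau of shape `λ*μ` and unbarred
content `ν`. -/
def IsLR (L : SkewBarredTableau d lam mu) (ν : Fin d → ℕ) : Prop :=
  L.Yamanouchi ∧ ∀ i : Fin d, L.content ((i : ℕ) + 1) = ν i

/-- The index `|a|' + ω(L^u_{<a})_{|a|}` of the first `y` in the factor of `c_L` at a
barred cell `a`. -/
def eIdx (L : SkewBarredTableau d lam mu) (a : ℕ × ℕ) : ℤ :=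
  ((d : ℤ) + 1 - (L.bot a : ℤ)) + (L.countBefore a (L.bot a) : ℤ)

/-- The index `|a|' + c(a) - r(a)` of the second `y` in the factor of `c_L` at a barred
cell `a`. -/
def fIdx (L : SkewBarredTableau d lam mu) (a : ℕ × ℕ) : ℤ :=
  ((d : ℤ) + 1 - (L.bot a : ℤ)) + (a.2 : ℤ) - (a.1 : ℤ)

/-- The weight `c_L = ∏_{a barred} (y_{|a|'+ω(L^u_{<a})_{|a|}} - y_{|a|'+c(a)-r(a)})`. -/
def cWt (L : SkewBarredTableau d lam mu) : P d :=
  ∏ a ∈ (cells d mu).filter (fun a => L.barred a), (yI d (L.eIdx a) - yI d (L.fIdx a))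

/-- `Δ(a) = ω(L^u_{≤a})_{|a|} - c(a) + r(a)`. -/
def Δ (L : SkewBarredTableau d lam mu) (a : ℕ × ℕ) : ℤ :=
  (L.countUpTo a (L.bot a) : ℤ) - ((a.2 : ℤ) + 1) + ((a.1 : ℤ) + 1)

end SkewBarredTableau

/-! ### Reverse barred tableaux -/

/-- A reverse barred tableau of shape `μ`. -/
structure RevBarredTableau (d : ℕ) (μ : Fin d → ℕ) where
  val : ℕ × ℕ → ℕ
  barred : ℕ × ℕ → Prop
  mem : ∀ a ∈ cells d μ, 1 ≤ val a ∧ val a ≤ d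
  zero : ∀ a ∉ cells d μ, val a = 0
  barred_sub : ∀ a, barred a → a ∈ cells d μ
  row : ∀ r c : ℕ, (r, c + 1) ∈ cells d μ → val (r, c + 1) ≤ val (r, c)
  col : ∀ r c : ℕ, (r + 1, c) ∈ cells d μ → val (r + 1, c) < val (r, c)

namespace RevBarredTableau

variable {d : ℕ} {μ : Fin d → ℕ}

/-- `ω(B^u_{<a})_k`. -/
def countBefore (B : RevBarredTableau d μ) (a : ℕ × ℕ) (k : ℕ) : ℕ :=
  ((cells d μ).filter fun b => ¬ B.barred b ∧ B.val b = k ∧ revBefore a b).card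

/-- `ω(B^u_{≤a})_k` (including `a` itself when unbarred). -/
def countUpTo (B : RevBarredTableau d μ) (a : ℕ × ℕ) (k : ℕ) : ℕ :=
  ((cells d μ).filter fun b => ¬ B.barred b ∧ B.val b = k ∧ (revBefore a b ∨ b = a)).card

/-- `ω(B^u)_k`. -/
def content (B : RevBarredTableau d μ) (k : ℕ) : ℕ :=
  ((cells d μ).filter fun b => ¬ B.barred b ∧ B.val b = k).card

/-- `e_{ξ,B}(a) = (ξ + ω(B^u_{<a}))_{|a|}`. -/
def eIdx (B : RevBarredTableau d μ) (ξ : Fin d → ℕ) (a : ℕ × ℕ) : ℤ :=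
  (vecAt ξ (B.val a) : ℤ) + (B.countBefore a (B.val a) : ℤ)

/-- `f_B(a) = |a|' + c(a) - r(a)`. -/
def fIdx (B : RevBarredTableau d μ) (a : ℕ × ℕ) : ℤ :=
  ((d : ℤ) + 1 - (B.val a : ℤ)) + (a.2 : ℤ) - (a.1 : ℤ)

/-- `c_{ξ,B} = ∏_{a barred} (y_{e_{ξ,B}(a)} - y_{f_B(a)})`. -/
def cXi (B : RevBarredTableau d μ) (ξ : Fin d → ℕ) : P d :=
  ∏ a ∈ (cells d μ).filter (fun a => B.barred a), (yI d (B.eIdx ξ a) - yI d (B.fIdx a))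

/-- The unbarred column word of `λ*B` is Yamanouchi (the `λ`-part is the canonical
filling of `λ`, whose whole content `λ` is added to every prefix of `B^u`). -/
def StarYam (B : RevBarredTableau d μ) (lam : Fin d → ℕ) : Prop :=
  ∀ a ∈ cells d μ, ¬ B.barred a → ∀ k : ℕ, 1 ≤ k →
    vecAt lam (k + 1) + B.countUpTo a (k + 1) ≤ vecAt lam k + B.countUpTo a k

end RevBarredTableau

/-! ### Reverse hatted tableaux -/

/-- A hat decoration: none, left hat, or right hat. -/
inductive Hat where
  | unhatted : Hat
  | left : Hat
  | right : Hat
deriving DecidableEq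

/-- A reverse hatted tableau of shape `μ`. -/
structure RevHattedTableau (d : ℕ) (μ : Fin d → ℕ) where
  val : ℕ × ℕ → ℕ
  hat : ℕ × ℕ → Hat
  mem : ∀ a ∈ cells d μ, 1 ≤ val a ∧ val a ≤ d
  zero : ∀ a ∉ cells d μ, val a = 0
  hat_out : ∀ a ∉ cells d μ, hat a = Hat.unhatted
  row : ∀ r c : ℕ, (r, c + 1) ∈ cells d μ → val (r, c + 1) ≤ val (r, c)
  col : ∀ r c : ℕ, (r + 1, c) ∈ cells d μ → val (r + 1, c) < val (r, c)

namespace RevHattedTableau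

variable {d : ℕ} {μ : Fin d → ℕ}

/-- `ω(H^u_{<a})_k`: content of the unhatted column word of `H` read before `a`. -/
def countBefore (H : RevHattedTableau d μ) (a : ℕ × ℕ) (k : ℕ) : ℕ :=
  ((cells d μ).filter fun b => H.hat b = Hat.unhatted ∧ H.val b = k ∧ revBefore a b).card

/-- `ω(H^u)_k`. -/
def content (H : RevHattedTableau d μ) (k : ℕ) : ℕ :=
  ((cells d μ).filter fun b => H.hat b = Hat.unhatted ∧ H.val b = k).card

/-- `e_{ξ,H}(a) = (ξ + ω(H^u_{<a}))_{|a|}`. -/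
def eIdx (H : RevHattedTableau d μ) (ξ : Fin d → ℕ) (a : ℕ × ℕ) : ℤ :=
  (vecAt ξ (H.val a) : ℤ) + (H.countBefore a (H.val a) : ℤ)

/-- `f_H(a) = |a|' + c(a) - r(a)`. -/
def fIdx (H : RevHattedTableau d μ) (a : ℕ × ℕ) : ℤ :=
  ((d : ℤ) + 1 - (H.val a : ℤ)) + (a.2 : ℤ) - (a.1 : ℤ)

/-- `d_{ξ,H} = ∏_{a ∈ H^l} y_{e_{ξ,H}(a)} · ∏_{a ∈ H^r} (-y_{f_H(a)})`. -/
def dWt (H : RevHattedTableau d μ) (ξ : Fin d → ℕ) : P d :=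
  (∏ a ∈ (cells d μ).filter (fun a => H.hat a = Hat.left), yI d (H.eIdx ξ a)) *
  ∏ a ∈ (cells d μ).filter (fun a => H.hat a = Hat.right), (-(yI d (H.fIdx a)))

end RevHattedTableau

/-- `H̄ = B`: `H` unbars to the reverse barred tableau `B`. -/
def UnbarsTo {d : ℕ} {μ : Fin d → ℕ} (H : RevHattedTableau d μ)
    (B : RevBarredTableau d μ) : Prop :=
  H.val = B.val ∧ ∀ a, (H.hat a ≠ Hat.unhatted ↔ B.barred a)

/-- The simple transposition `σ_i` on values: exchanges `i` and `i+1`. -/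
def swapVal (i v : ℕ) : ℕ := if v = i then i + 1 else if v = i + 1 then i else v

/-- The action of `σ_i` on `ℕ^d` by permuting coordinates. -/
def swapVec {d : ℕ} (i : ℕ) (ξ : Fin d → ℕ) : Fin d → ℕ :=
  fun j => vecAt ξ (swapVal i ((j : ℕ) + 1))

/-! ### Reverse (barred) subtableaux -/

/-- A reverse subtableau of shape `μ`: each cell is empty (value `0`) or carries a value
in `{1,…,d}`; no row or column conditions. -/
structure RevSubTableau (d : ℕ) (μ : Fin d → ℕ) where
  val : ℕ × ℕ → ℕ
  mem : ∀ a ∈ cells d μ, val a ≤ d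
  zero : ∀ a ∉ cells d μ, val a = 0

/-- A reverse barred subtableau of shape `μ`: a reverse subtableau some of whose filled
cells are barred. -/
structure RevBarredSubTableau (d : ℕ) (μ : Fin d → ℕ) where
  val : ℕ × ℕ → ℕ
  barred : ℕ × ℕ → Prop
  mem : ∀ a ∈ cells d μ, val a ≤ d
  zero : ∀ a ∉ cells d μ, val a = 0
  barred_filled : ∀ a, barred a → a ∈ cells d μ ∧ val a ≠ 0

/-- `(x|y)^R` for a reverse subtableau `R`. -/
def RevSubTableau.xyProd {d : ℕ} {μ : Fin d → ℕ} (R : RevSubTableau d μ) : P d :=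
  ∏ a ∈ (cells d μ).filter (fun a => R.val a ≠ 0), factor d (R.val a) a

namespace RevBarredSubTableau

variable {d : ℕ} {μ : Fin d → ℕ}

/-- `ω(B^u_{<a})_k`: unbarred filled entries of value `k` read before `a`. -/
def countBefore (B : RevBarredSubTableau d μ) (a : ℕ × ℕ) (k : ℕ) : ℕ :=
  ((cells d μ).filter fun b => ¬ B.barred b ∧ B.val b = k ∧ revBefore a b).card

/-- `ω(B^u)_k`. -/
def content (B : RevBarredSubTableau d μ) (k : ℕ) : ℕ :=
  ((cells d μ).filter fun b => ¬ B.barred b ∧ B.val b = k).card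

/-- `e_{ξ,B}(a) = (ξ + ω(B^u_{<a}))_{|a|}`. -/
def eIdx (B : RevBarredSubTableau d μ) (ξ : Fin d → ℕ) (a : ℕ × ℕ) : ℤ :=
  (vecAt ξ (B.val a) : ℤ) + (B.countBefore a (B.val a) : ℤ)

/-- `f_B(a) = |a|' + c(a) - r(a)`. -/
def fIdx (B : RevBarredSubTableau d μ) (a : ℕ × ℕ) : ℤ :=
  ((d : ℤ) + 1 - (B.val a : ℤ)) + (a.2 : ℤ) - (a.1 : ℤ)

/-- `c_{ξ,B}`. -/
def cXi (B : RevBarredSubTableau d μ) (ξ : Fin d → ℕ) : P d :=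
  ∏ a ∈ (cells d μ).filter (fun a => B.barred a), (yI d (B.eIdx ξ a) - yI d (B.fIdx a))

end RevBarredSubTableau

end EqLR

/-! At a barred cell `a` the two indices of the factor differ by
`Δ(a) = ω(L^u_{≤a})_{|a|} - c(a) + r(a)`. Moving one cell left along a row of `μ`, the
value weakly decreases, so by the Yamanouchi property the count `ω(L^u_{<a})_{|a|}` does not
drop; hence `Δ` drops by at most one, and not at all at an unbarred cell. Since `Δ ≥ 0` in the
rightmost column, `Δ ≥ 1` everywhere unless it first reaches `0` at a barred cell, whose factor
`y_e - y_f` then vanishes. -/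

theorem Finset.exists_forall_eq_or_lt_of_injective {α β : Type*} [LinearOrder β] {f : α → β}
    (hf : Function.Injective f) {s : Finset α} (hs : s.Nonempty) :
    ∃ a ∈ s, ∀ b ∈ s, b = a ∨ f b < f a := by
  obtain ⟨a, ha, hmax⟩ := s.exists_max_image f hs
  refine ⟨a, ha, fun b hb => ?_⟩
  rcases (hmax b hb).lt_or_eq with h | h
  · exact Or.inr h
  · exact Or.inl (hf h)

namespace EqLR

/-- Position in the column reading word of a reverse diagram. -/
def revKey (a : ℕ × ℕ) : ℕ ×ₗ ℕᵒᵈ := toLex (a.2, OrderDual.toDual a.1)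

/-- Position in the column reading word of a Young diagram. -/
def youngKey (a : ℕ × ℕ) : ℕᵒᵈ ×ₗ ℕ := toLex (OrderDual.toDual a.2, a.1)

lemma revKey_injective : Function.Injective revKey := by
  intro a b h
  simp only [revKey, toLex_inj, Prod.mk.injEq, OrderDual.toDual_inj] at h
  exact Prod.ext h.2 h.1

lemma youngKey_injective : Function.Injective youngKey := by
  intro a b h
  simp only [youngKey, toLex_inj, Prod.mk.injEq, OrderDual.toDual_inj] at h
  exact Prod.ext h.2 h.1

lemma revBefore_iff {a b : ℕ × ℕ} : revBefore a b ↔ revKey b < revKey a := by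
  simp only [revBefore, revKey, Prod.Lex.toLex_lt_toLex, OrderDual.toDual_lt_toDual]

lemma youngBefore_iff {a b : ℕ × ℕ} : youngBefore a b ↔ youngKey b < youngKey a := by
  simp only [youngBefore, youngKey, Prod.Lex.toLex_lt_toLex, OrderDual.toDual_lt_toDual,
    OrderDual.toDual_inj]

lemma revBefore_trans {a b c : ℕ × ℕ} (hab : revBefore a b) (hbc : revBefore b c) :
    revBefore a c :=
  revBefore_iff.2 ((revBefore_iff.1 hbc).trans (revBefore_iff.1 hab))

lemma revBefore_irrefl (a : ℕ × ℕ) : ¬ revBefore a a := fun h => (revBefore_iff.1 h).false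

lemma mem_cells_of_succ {d : ℕ} {μ : Fin d → ℕ} {r c : ℕ} (h : (r, c + 1) ∈ cells d μ) :
    (r, c) ∈ cells d μ := by
  simp only [cells, Finset.mem_filter, Finset.mem_product, Finset.mem_range] at h ⊢
  obtain ⟨⟨hr, hc⟩, hr', hμ⟩ := h
  exact ⟨⟨hr, by omega⟩, hr', by omega⟩

namespace SkewBarredTableau

variable {d : ℕ} {lam mu : Fin d → ℕ} {L : SkewBarredTableau d lam mu}

lemma card_filter_top_succ_le (hY : L.Yamanouchi) {k : ℕ} (hk : 1 ≤ k) :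
    ((cells d lam).filter fun b => L.top b = k + 1).card ≤
      ((cells d lam).filter fun b => L.top b = k).card := by
  rcases (cells d lam).eq_empty_or_nonempty with h | h
  · simp [h]
  obtain ⟨a, ha, hlast⟩ := Finset.exists_forall_eq_or_lt_of_injective youngKey_injective h
  have hall : ∀ j, ((cells d lam).filter fun b => L.top b = j).card = L.topCountUpTo a j := by
    intro j
    refine congrArg Finset.card (Finset.filter_congr fun b hb => ?_)
    rcases hlast b hb with rfl | hlt
    · simp
    · simp [youngBefore_iff.2 hlt]
  rw [hall, hall]
  exact hY.1 a ha k hk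

lemma countBefore_succ_le (hY : L.Yamanouchi) (a : ℕ × ℕ) {k : ℕ} (hk : 1 ≤ k) :
    L.countBefore a (k + 1) ≤ L.countBefore a k := by
  set S := (cells d mu).filter fun b => ¬ L.barred b ∧ revBefore a b
  rcases S.eq_empty_or_nonempty with hS | hS
  · have hempty : ∀ j, ((cells d mu).filter fun b =>
        ¬ L.barred b ∧ L.bot b = j ∧ revBefore a b) = ∅ := fun j =>
      Finset.filter_eq_empty_iff.2 fun b hb ⟨hub, _, hab⟩ =>
        Finset.notMem_empty b (hS ▸ Finset.mem_filter.2 ⟨hb, hub, hab⟩)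
    simpa [countBefore, hempty] using card_filter_top_succ_le hY hk
  -- the prefix before `a` ends at the last unbarred cell `a'` read before `a`
  obtain ⟨a', ha'S, hlast⟩ := Finset.exists_forall_eq_or_lt_of_injective revKey_injective hS
  obtain ⟨ha', hub', haa'⟩ := Finset.mem_filter.1 ha'S
  have hprefix : ∀ j, L.countBefore a j = L.countUpTo a' j := by
    intro j
    refine congrArg (_ + ·) (congrArg Finset.card (Finset.filter_congr fun b hb => ?_))
    constructor
    · rintro ⟨hub, hj, hab⟩
      refine ⟨hub, hj, ?_⟩
      rcases hlast b (Finset.mem_filter.2 ⟨hb, hub, hab⟩) with rfl | hlt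
      · exact Or.inr rfl
      · exact Or.inl (revBefore_iff.2 hlt)
    · rintro ⟨hub, hj, ha'b | rfl⟩
      · exact ⟨hub, hj, revBefore_trans haa' ha'b⟩
      · exact ⟨hub, hj, haa'⟩
  rw [hprefix, hprefix]
  exact hY.2 a' ha' hub' k hk

lemma countBefore_antitone (hY : L.Yamanouchi) (a : ℕ × ℕ) {v w : ℕ} (hv : 1 ≤ v)
    (hvw : v ≤ w) : L.countBefore a w ≤ L.countBefore a v := by
  induction w, hvw using Nat.le_induction with
  | base => exact le_rfl
  | succ w hw ih => exact (countBefore_succ_le hY a (hv.trans hw)).trans ih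

lemma countUpTo_self {a : ℕ × ℕ} (ha : a ∈ cells d mu) :
    L.countUpTo a (L.bot a) = L.countBefore a (L.bot a) + if L.barred a then 0 else 1 := by
  unfold countUpTo countBefore
  rw [add_assoc]
  congr 1
  split_ifs with hb
  · refine congrArg Finset.card (Finset.filter_congr fun b _ => ?_)
    constructor
    · rintro ⟨hub, hj, hab | rfl⟩
      · exact ⟨hub, hj, hab⟩
      · exact absurd hb hub
    · rintro ⟨hub, hj, hab⟩
      exact ⟨hub, hj, Or.inl hab⟩
  · rw [← Finset.card_insert_of_notMem fun h => revBefore_irrefl a (Finset.mem_filter.1 h).2.2.2]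
    congr 1
    ext b
    simp only [Finset.mem_insert, Finset.mem_filter]
    constructor
    · rintro ⟨hb', hub, hj, hab | rfl⟩
      · exact Or.inr ⟨hb', hub, hj, hab⟩
      · exact Or.inl rfl
    · rintro (rfl | ⟨hb', hub, hj, hab⟩)
      · exact ⟨ha, hb, rfl, Or.inr rfl⟩
      · exact ⟨hb', hub, hj, Or.inl hab⟩

lemma countUpTo_le_countBefore {a b : ℕ × ℕ} (hab : revBefore a b) (k : ℕ) :
    L.countUpTo b k ≤ L.countBefore a k := by
  refine Nat.add_le_add_left (Finset.card_le_card fun x hx => ?_) _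
  obtain ⟨hxμ, hub, hk, hbx | rfl⟩ := Finset.mem_filter.1 hx
  · exact Finset.mem_filter.2 ⟨hxμ, hub, hk, revBefore_trans hab hbx⟩
  · exact Finset.mem_filter.2 ⟨hxμ, hub, hk, hab⟩

lemma eIdx_eq_fIdx_add_Δ {a : ℕ × ℕ} (hb : L.barred a) : L.eIdx a = L.fIdx a + L.Δ a := by
  have h := countUpTo_self (L := L) (L.barred_sub a hb)
  simp only [hb, if_true, add_zero] at h
  simp only [eIdx, fIdx, Δ, h]
  ring

lemma Δ_zero_ge {r : ℕ} (ha : (r, 0) ∈ cells d mu) :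
    (if L.barred (r, 0) then 0 else 1 : ℤ) ≤ L.Δ (r, 0) := by
  have h := countUpTo_self (L := L) ha
  simp only [Δ, h]
  split_ifs <;> push_cast <;> omega

lemma Δ_succ_ge (hY : L.Yamanouchi) {r c : ℕ} (ha : (r, c + 1) ∈ cells d mu) :
    L.Δ (r, c) - 1 + (if L.barred (r, c + 1) then 0 else 1 : ℤ) ≤ L.Δ (r, c + 1) := by
  have hprev : L.countUpTo (r, c) (L.bot (r, c)) ≤
      L.countBefore (r, c + 1) (L.bot (r, c + 1)) :=
    (countUpTo_le_countBefore (Or.inl (Nat.lt_succ_self c)) _).trans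
      (countBefore_antitone hY _ (L.bot_mem _ ha).1 (L.bot_row r c ha))
  have h := countUpTo_self (L := L) ha
  simp only [Δ, h]
  split_ifs <;> push_cast <;> omega

lemma one_le_Δ (hY : L.Yamanouchi) (hne : ∀ a ∈ cells d mu, L.barred a → L.Δ a ≠ 0) :
    ∀ a ∈ cells d mu, 1 ≤ L.Δ a := by
  rintro ⟨r, c⟩ ha
  induction c with
  | zero =>
    have h := Δ_zero_ge (L := L) ha
    by_cases hb : L.barred (r, 0)
    · have := hne _ ha hb
      simp only [hb, if_true] at h
      omega
    · simpa [hb] using h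
  | succ c ih =>
    have hprev := ih (mem_cells_of_succ ha)
    have h := Δ_succ_ge hY ha
    by_cases hb : L.barred (r, c + 1)
    · have := hne _ ha hb
      simp only [hb, if_true] at h
      omega
    · simp only [hb, if_false] at h
      omega

end SkewBarredTableau

theorem cWt_nonneg_general (d : ℕ)
    (lam mu nu : Fin d → ℕ)
    (L : SkewBarredTableau d lam mu) (hL : L.IsLR nu) :
    L.cWt = 0 ∨ ∀ a ∈ cells d mu, L.barred a → L.fIdx a < L.eIdx a := by
  by_cases hzero : ∃ a ∈ cells d mu, L.barred a ∧ L.Δ a = 0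
  · left
    obtain ⟨a, ha, hb, hΔ⟩ := hzero
    refine Finset.prod_eq_zero (Finset.mem_filter.2 ⟨ha, hb⟩) ?_
    rw [SkewBarredTableau.eIdx_eq_fIdx_add_Δ hb, hΔ, add_zero, sub_self]
  · right
    push Not at hzero
    intro a ha hb
    have := SkewBarredTableau.one_le_Δ hL.1 hzero a ha
    rw [SkewBarredTableau.eIdx_eq_fIdx_add_Δ hb]
    omega

/-- Nonnegativity: for every equivariant LR skew tableau `L`, either
`c_L = 0` or every factor of `c_L` is of the form `y_i - y_j` with `i > j`. -/
theorem cWt_nonneg (d : ℕ) (hd : 1 ≤ d)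
    (lam mu nu : Fin d → ℕ)
    (hlam : IsPartitionVec lam) (hmu : IsPartitionVec mu) (hnu : IsPartitionVec nu)
    (L : SkewBarredTableau d lam mu) (hL : L.IsLR nu) :
    L.cWt = 0 ∨ ∀ a ∈ cells d mu, L.barred a → L.fIdx a < L.eIdx a :=
  cWt_nonneg_general d lam mu nu L hL

end EqLR
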